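/- (Hamiltonian of the r-spin Givental field; content of the quantization propositions.) Fix integers r ≥ 2 and d ≥ 1, let V = H ⊗ ℚ^{r−1} with basis (h_μ ⊗ e_m) and the tensor-product bilinear form, and let 𝒱 = V((z⁻¹)) with Givental's form ω and Darboux coordinates q_a^{μ⊗m}, p_{a,μ⊗m}. Let T be the operator of multiplication by (z^d/(d+1)!) · Id_H ⊗ diag[ B_{d+1}(1/r), …, B_{d+1}((r−1)/r) ]. Then for every f ∈ 𝒱: (1/2) ω(Tf, f) = − Σ_{a≥0, μ, 1≤m≤r−1} (B_{d+1}(m/r)/(d+1)!) q_a^{μ⊗m}(f) p_{a+d, μ⊗m}(f) + (1/2) Σ_{a+a'=d−1, a,a'≥0, μ, μ', m, m'} (−1)^{a'} (B_{d+1}(m/r)/(d+1)!) g^{μ⊗m, μ'⊗m'} p_{a, μ⊗m}(f) p_{a', μ'⊗m'}(f), where (g^{μ⊗m, μ'⊗m'}) is the inverse of the Gram matrix of the tensor-product form. -/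

import Mathlib

noncomputable section

open scoped TensorProduct

/-- `f : ℤ → V` has coefficients vanishing for all sufficiently large `k`
(finitely many positive powers of `z`). -/
def IsGivental {V : Type*} [AddCommGroup V] [Module ℚ V] (f : ℤ → V) : Prop :=
  ∃ N : ℤ, ∀ k : ℤ, N < k → f k = 0

/-- Givental's symplectic form `ω(f₁, f₂) = Σ_{k∈ℤ} (−1)^k g(f₁_k, f₂_{−1−k})`. -/
def giventalForm {V : Type*} [AddCommGroup V] [Module ℚ V]
    (g : V →ₗ[ℚ] V →ₗ[ℚ] ℚ) (f₁ f₂ : ℤ → V) : ℚ :=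
  ∑ᶠ k : ℤ, (-1 : ℚ) ^ k * g (f₁ k) (f₂ (-1 - k))

/-- The Darboux coordinate `q_a^μ(f)`: the `h_μ`-coordinate of the coefficient `f_a`. -/
def qCoord {V : Type*} [AddCommGroup V] [Module ℚ V] {ι : Type*}
    (b : Module.Basis ι ℚ V) (f : ℤ → V) (a : ℕ) (μ : ι) : ℚ :=
  b.repr (f a) μ

/-- The Darboux coordinate `p_{a,μ}(f) = (−1)^{a+1} g(f_{−1−a}, h_μ)`. -/
def pCoord {V : Type*} [AddCommGroup V] [Module ℚ V] {ι : Type*}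
    (g : V →ₗ[ℚ] V →ₗ[ℚ] ℚ) (b : Module.Basis ι ℚ V) (f : ℤ → V) (a : ℕ) (μ : ι) : ℚ :=
  (-1 : ℚ) ^ (a + 1) * g (f (-1 - a)) (b μ)

/-- The bilinear form on `ℚ^{r−1}` given by `g(e_a, e_b) = δ_{a+b,r}`
(the index `i : Fin (r-1)` corresponds to `m = i + 1`). -/
def spinPairing (r : ℕ) : (Fin (r - 1) → ℚ) →ₗ[ℚ] (Fin (r - 1) → ℚ) →ₗ[ℚ] ℚ :=
  Matrix.toLinearMap₂' ℚ
    (Matrix.of fun i j : Fin (r - 1) =>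
      if (i : ℕ) + 1 + ((j : ℕ) + 1) = r then (1 : ℚ) else 0)

/-- The diagonal operator `diag[B_{d+1}(1/r), …, B_{d+1}((r−1)/r)]` on `ℚ^{r−1}`. -/
def bernoulliDiag (r d : ℕ) : (Fin (r - 1) → ℚ) →ₗ[ℚ] (Fin (r - 1) → ℚ) :=
  LinearMap.pi fun i =>
    ((Polynomial.bernoulli (d + 1)).eval ((((i : ℕ) : ℚ) + 1) / r)) • LinearMap.proj i

/-- The operator of multiplication by
`(z^d/(d+1)!) · Id_H ⊗ diag[B_{d+1}(1/r), …, B_{d+1}((r−1)/r)]` on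
`𝒱 = (H ⊗ ℚ^{r−1})((z⁻¹))`. -/
def rspinField {H : Type*} [AddCommGroup H] [Module ℚ H] (r d : ℕ)
    (f : ℤ → H ⊗[ℚ] (Fin (r - 1) → ℚ)) : ℤ → H ⊗[ℚ] (Fin (r - 1) → ℚ) :=
  fun k => ((Nat.factorial (d + 1) : ℚ))⁻¹ •
    (TensorProduct.map LinearMap.id (bernoulliDiag r d)) (f (k - d))

/-
Write `T f = z^d · L f` with `L = (d+1)!⁻¹ · Id ⊗ diag(B_{d+1}(m/r))`. The pairing on `ℚ^{r-1}`
only couples `e_m` with `e_{r-m}`, and `B_{d+1}(1 - x) = (-1)^{d+1} B_{d+1}(x)`, so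
`g(Lu, v) = (-1)^{d+1} g(u, Lv)`. In `ω(Tf, f) = Σ_k (-1)^k g(L f_{k-d}, f_{-1-k})` this identifies
the terms with `k < 0` with those with `k ≥ d`, which together give twice the `q p` sum. The `d`
terms with `0 ≤ k < d` pair two negative coefficients of `f`; these are recovered from their
`p`-coordinates through the inverse Gram matrix.
-/

open Finset

theorem finsum_int_eq_sum_range_add_finsum_nat_add_add_finsum_neg {M : Type*} [AddCommGroup M]
    {F : ℤ → M} (hF : F.HasFiniteSupport) (d : ℕ) :
    ∑ᶠ k, F k = ∑ a ∈ range d, F a + ∑ᶠ a : ℕ, F (a + d) + ∑ᶠ a : ℕ, F (-(a + 1)) := by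
  -- finite sums are insensitive to the topology, so borrow the `tsum` API for the discrete one
  let _ : TopologicalSpace M := ⊥
  have _ : DiscreteTopology M := ⟨rfl⟩
  have hnat : (fun a : ℕ => F a).HasFiniteSupport := hF.fun_comp_of_injective Nat.cast_injective
  have hshift : (fun a : ℕ => F (a + d)).HasFiniteSupport :=
    hF.fun_comp_of_injective fun a b h => by simpa using h
  have hneg : (fun a : ℕ => F (-(a + 1))).HasFiniteSupport :=
    hF.fun_comp_of_injective fun a b h => by simpa using h
  rw [← tsum_eq_finsum (L := .unconditional _) hF, tsum_of_nat_of_neg_add_one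
    (summable_of_hasFiniteSupport hnat) (summable_of_hasFiniteSupport hneg),
    ← (summable_of_hasFiniteSupport hnat).sum_add_tsum_nat_add d,
    tsum_eq_finsum (L := .unconditional _) hneg]
  push_cast
  rw [tsum_eq_finsum (L := .unconditional _) hshift]

namespace LinearMap.BilinForm

variable {R M ι : Type*} [CommRing R] [AddCommGroup M] [Module R M]

theorem apply_diagonal_left_eq_mul_apply_diagonal_right (B : LinearMap.BilinForm R M)
    (b : Module.Basis ι R M) {L : M →ₗ[R] M} {c : ι → R} (hL : ∀ x, L (b x) = c x • b x)
    {ε : R} (hc : ∀ x y, c x * B (b x) (b y) = ε * (c y * B (b x) (b y))) (u v : M) :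
    B (L u) v = ε * B u (L v) := by
  have hext : B.compl₁₂ L LinearMap.id = ε • B.compl₁₂ LinearMap.id L :=
    LinearMap.ext_basis b b fun x y => by simp [hL, hc]
  simpa using LinearMap.congr_fun₂ hext u v

theorem tmul_map_id_left {M' : Type*} [AddCommGroup M'] [Module R M']
    (B : LinearMap.BilinForm R M) (B' : LinearMap.BilinForm R M') {D : M' →ₗ[R] M'} {ε : R}
    (hD : ∀ w w', B' (D w) w' = ε * B' w (D w')) (u v : M ⊗[R] M') :
    B.tmul B' (TensorProduct.map LinearMap.id D u) v =
      ε * B.tmul B' u (TensorProduct.map LinearMap.id D v) := by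
  induction u using TensorProduct.induction_on with
  | zero => simp
  | add u u' hu hu' => simp [hu, hu', mul_add]
  | tmul m m' =>
    induction v using TensorProduct.induction_on with
    | zero => simp
    | add v v' hv hv' => rw [map_add, map_add, map_add, hv, hv', mul_add]
    | tmul n n' => simp [hD, mul_assoc]

variable [Fintype ι]

theorem apply_diagonal_left (B : LinearMap.BilinForm R M) (b : Module.Basis ι R M)
    {L : M →ₗ[R] M} {c : ι → R} (hL : ∀ x, L (b x) = c x • b x) (u v : M) :
    B (L u) v = ∑ x, c x * b.repr u x * B (b x) v := by
  conv_lhs => rw [← b.sum_repr u]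
  simp only [map_sum, map_smul, hL, smul_smul, LinearMap.sum_apply, LinearMap.smul_apply,
    smul_eq_mul, mul_comm (b.repr u _)]

variable [DecidableEq ι]

open Matrix in
theorem _root_.Module.Basis.repr_eq_sum_inv_toMatrix (B : LinearMap.BilinForm R M)
    (b : Module.Basis ι R M) (hB : IsUnit (toMatrix b B).det) (u : M) (x : ι) :
    b.repr u x = ∑ y, (toMatrix b B)⁻¹ x y * B (b y) u := by
  have hcol : ∀ y, B (b y) u = (toMatrix b B *ᵥ b.repr u) y := by
    intro y
    rw [apply_eq_dotProduct_toMatrix_mulVec b, b.repr_self, Finsupp.single_eq_pi_single,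
      single_dotProduct, one_mul]
  simp only [hcol]
  change _ = ((toMatrix b B)⁻¹ *ᵥ (toMatrix b B *ᵥ b.repr u)) x
  rw [mulVec_mulVec, nonsing_inv_mul _ hB, one_mulVec]

theorem apply_diagonal_left_eq_sum_inv_toMatrix (B : LinearMap.BilinForm R M)
    (hB : ∀ u v, B u v = B v u) (b : Module.Basis ι R M) (hdet : IsUnit (toMatrix b B).det)
    {L : M →ₗ[R] M} {c : ι → R} (hL : ∀ x, L (b x) = c x • b x) (u v : M) :
    B (L u) v = ∑ x, ∑ y, c x * (toMatrix b B)⁻¹ x y * B v (b x) * B u (b y) := by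
  rw [apply_diagonal_left B b hL]
  refine sum_congr rfl fun x _ => ?_
  rw [b.repr_eq_sum_inv_toMatrix B hdet, mul_sum, sum_mul]
  exact sum_congr rfl fun y _ => by rw [hB (b x), hB (b y)]; ring

theorem toMatrix_tmul {M' ι' : Type*} [AddCommGroup M'] [Module R M'] [Fintype ι']
    [DecidableEq ι'] (B : LinearMap.BilinForm R M) (B' : LinearMap.BilinForm R M')
    (b : Module.Basis ι R M) (b' : Module.Basis ι' R M') :
    toMatrix (b.tensorProduct b') (B.tmul B') =
      Matrix.kroneckerMap (· * ·) (toMatrix b B) (toMatrix b' B') := by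
  ext x y
  rw [toMatrix_apply, Matrix.kroneckerMap_apply, toMatrix_apply, toMatrix_apply,
    Module.Basis.tensorProduct_apply', Module.Basis.tensorProduct_apply', tensorDistrib_tmul,
    smul_eq_mul, mul_comm]

end LinearMap.BilinForm

theorem apply_basis_eq_neg_one_pow_mul_pCoord {V ι : Type*} [AddCommGroup V] [Module ℚ V]
    (B : V →ₗ[ℚ] V →ₗ[ℚ] ℚ) (b : Module.Basis ι ℚ V) (f : ℤ → V) (a : ℕ) (x : ι) :
    B (f (-1 - a)) (b x) = (-1) ^ (a + 1) * pCoord B b f a x := by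
  rw [pCoord, ← mul_assoc, ← mul_pow]
  norm_num

section Hamiltonian

variable {V : Type*} [AddCommGroup V] [Module ℚ V] (B : V →ₗ[ℚ] V →ₗ[ℚ] ℚ)
  {L : V →ₗ[ℚ] V} {d : ℕ} {f : ℤ → V}

theorem half_giventalForm_shift_eq (hB : ∀ u v, B u v = B v u)
    (hL : ∀ u v, B (L u) v = (-1) ^ (d + 1) * B u (L v)) (hf : IsGivental f) :
    (1 / 2 : ℚ) * giventalForm B (fun k => L (f (k - d))) f =
      ∑ᶠ a : ℕ, (-1) ^ (a + d) * B (L (f a)) (f (-1 - (a + d : ℕ))) +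
      (1 / 2 : ℚ) * ∑ a ∈ range d, (-1) ^ a * B (L (f (-1 - (d - 1 - a : ℕ)))) (f (-1 - a)) := by
  set F : ℤ → ℚ := fun k => (-1) ^ k * B (L (f (k - d))) (f (-1 - k))
  obtain ⟨N, hN⟩ := hf
  have hFfin : F.HasFiniteSupport := by
    refine (Set.finite_Icc (-N - 1) (N + d)).subset fun k hk => ?_
    by_contra hout
    rw [Set.mem_Icc, not_and_or, not_le, not_le] at hout
    refine hk ?_
    rcases hout with hlow | hhigh
    · simp [F, hN (-1 - k) (by omega)]
    · simp [F, hN (k - d) (by omega)]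
  have hpos : ∀ a : ℕ, F (a + d) = (-1) ^ (a + d) * B (L (f a)) (f (-1 - (a + d : ℕ))) := by
    intro a
    simp only [F, add_sub_cancel_right]
    rw [← Nat.cast_add, zpow_natCast]
  have hneg : ∀ a : ℕ, F (-(a + 1)) = F (a + d) := by
    intro a
    have hsign : (-1 : ℚ) ^ (-((a : ℤ) + 1)) * (-1) ^ (d + 1) = (-1) ^ (a + d) := by
      rw [zpow_neg, ← Nat.cast_add_one, zpow_natCast, ← inv_pow, inv_neg_one]
      ring
    rw [hpos]
    simp only [F]
    rw [show -((a : ℤ) + 1) - d = -1 - (a + d : ℕ) by push_cast; ring,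
      show (-1 : ℤ) - -(a + 1) = a by ring, hL, hB (f _), ← hsign, mul_assoc]
  have hmid : ∀ a ∈ range d,
      F a = (-1) ^ a * B (L (f (-1 - (d - 1 - a : ℕ)))) (f (-1 - a)) := by
    intro a ha
    rw [mem_range] at ha
    simp only [F, zpow_natCast]
    rw [show (a : ℤ) - d = -1 - (d - 1 - a : ℕ) by omega]
  rw [giventalForm, finsum_int_eq_sum_range_add_finsum_nat_add_add_finsum_neg hFfin d,
    finsum_congr hneg, sum_congr rfl hmid, finsum_congr hpos]
  ring

theorem half_giventalForm_shift_eq_darboux {ι : Type*} [Fintype ι] [DecidableEq ι]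
    (hB : ∀ u v, B u v = B v u) (hL : ∀ u v, B (L u) v = (-1) ^ (d + 1) * B u (L v))
    (b : Module.Basis ι ℚ V) (hdet : IsUnit (LinearMap.BilinForm.toMatrix b B).det) {c : ι → ℚ}
    (hc : ∀ x, L (b x) = c x • b x) (hf : IsGivental f) :
    (1 / 2 : ℚ) * giventalForm B (fun k => L (f (k - d))) f =
      -(∑ᶠ a : ℕ, ∑ x, c x * qCoord b f a x * pCoord B b f (a + d) x) +
      (1 / 2 : ℚ) * ∑ a ∈ range d, ∑ x, ∑ y,
        (-1 : ℚ) ^ (d - 1 - a) * c x * (LinearMap.BilinForm.toMatrix b B)⁻¹ x y *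
          pCoord B b f a x * pCoord B b f (d - 1 - a) y := by
  rw [half_giventalForm_shift_eq B hB hL hf]
  congr 1
  · rw [← finsum_neg_distrib]
    refine finsum_congr fun a => ?_
    rw [LinearMap.BilinForm.apply_diagonal_left B b hc, mul_sum, ← sum_neg_distrib]
    refine sum_congr rfl fun x _ => ?_
    rw [qCoord, pCoord, hB (b x)]
    ring
  · congr 1
    refine sum_congr rfl fun a ha => ?_
    have hsign : (-1 : ℚ) ^ a * ((-1) ^ (a + 1) * (-1) ^ (d - 1 - a + 1)) = (-1) ^ (d - 1 - a) := by
      rw [← pow_add, ← pow_add]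
      exact neg_one_pow_congr (by rw [mem_range] at ha; simp only [Nat.even_iff]; omega)
    rw [LinearMap.BilinForm.apply_diagonal_left_eq_sum_inv_toMatrix B hB b hdet hc, mul_sum]
    refine sum_congr rfl fun x _ => ?_
    rw [mul_sum]
    refine sum_congr rfl fun y _ => ?_
    rw [apply_basis_eq_neg_one_pow_mul_pCoord, apply_basis_eq_neg_one_pow_mul_pCoord, ← hsign]
    ring

end Hamiltonian

theorem spinPairing_basisFun (r : ℕ) (i j : Fin (r - 1)) :
    spinPairing r (Pi.basisFun ℚ _ i) (Pi.basisFun ℚ _ j) = if Fin.rev i = j then 1 else 0 := by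
  have hrev : (i : ℕ) + 1 + ((j : ℕ) + 1) = r ↔ Fin.rev i = j := by
    rw [Fin.ext_iff, Fin.val_rev]; omega
  rw [Pi.basisFun_apply, Pi.basisFun_apply, spinPairing, Matrix.toLinearMap₂'_apply',
    single_dotProduct, Matrix.mulVec_single_one, one_mul, Matrix.col_apply, Matrix.of_apply]
  exact if_congr hrev rfl rfl

theorem spinPairing_comm (r : ℕ) (u v : Fin (r - 1) → ℚ) :
    spinPairing r u v = spinPairing r v u := by
  have hflip : spinPairing r = (spinPairing r).flip :=
    LinearMap.ext_basis (Pi.basisFun ℚ _) (Pi.basisFun ℚ _) fun i j => by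
      rw [LinearMap.flip_apply, spinPairing_basisFun, spinPairing_basisFun]
      exact if_congr ⟨fun h => h ▸ Fin.rev_rev i, fun h => h ▸ Fin.rev_rev j⟩ rfl rfl
  exact LinearMap.congr_fun₂ hflip u v

theorem toMatrix_spinPairing (r : ℕ) :
    LinearMap.BilinForm.toMatrix (Pi.basisFun ℚ _) (spinPairing r) = Fin.revPerm.permMatrix ℚ := by
  ext i j
  rw [LinearMap.BilinForm.toMatrix_apply, spinPairing_basisFun]
  simp [PEquiv.toMatrix_apply]

theorem bernoulliDiag_basisFun (r d : ℕ) (m : Fin (r - 1)) :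
    bernoulliDiag r d (Pi.basisFun ℚ _ m) =
      (Polynomial.bernoulli (d + 1)).eval ((((m : ℕ) : ℚ) + 1) / r) • Pi.basisFun ℚ _ m := by
  ext i
  by_cases h : i = m
  · subst h; simp [bernoulliDiag]
  · simp [bernoulliDiag, h]

theorem bernoulli_eval_rev (n r : ℕ) (i : Fin (r - 1)) :
    (Polynomial.bernoulli n).eval ((((Fin.rev i : ℕ) : ℚ) + 1) / r) =
      (-1) ^ n * (Polynomial.bernoulli n).eval ((((i : ℕ) : ℚ) + 1) / r) := by
  have hi := i.isLt
  have hr : (r : ℚ) ≠ 0 := by norm_cast; omega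
  have harg : (((Fin.rev i : ℕ) : ℚ) + 1) / r = 1 - (((i : ℕ) : ℚ) + 1) / r := by
    rw [Fin.val_rev, Nat.cast_sub (by omega), Nat.cast_sub (by omega)]
    field_simp
    push_cast
    ring
  rw [harg, Polynomial.bernoulli_eval_one_sub]

theorem spinPairing_bernoulliDiag_left (r d : ℕ) (u v : Fin (r - 1) → ℚ) :
    spinPairing r (bernoulliDiag r d u) v =
      (-1) ^ (d + 1) * spinPairing r u (bernoulliDiag r d v) := by
  refine LinearMap.BilinForm.apply_diagonal_left_eq_mul_apply_diagonal_right _ _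
    (bernoulliDiag_basisFun r d) (fun i j => ?_) u v
  rw [spinPairing_basisFun]
  split_ifs with h
  · subst h
    rw [bernoulli_eval_rev, mul_one, mul_one, ← mul_assoc, ← mul_pow]
    norm_num
  · simp

section RSpin

variable {H : Type*} [AddCommGroup H] [Module ℚ H]

variable (H) in
def rspinOperator (r d : ℕ) :
    H ⊗[ℚ] (Fin (r - 1) → ℚ) →ₗ[ℚ] H ⊗[ℚ] (Fin (r - 1) → ℚ) :=
  ((d + 1).factorial : ℚ)⁻¹ • TensorProduct.map LinearMap.id (bernoulliDiag r d)

theorem rspinField_eq (r d : ℕ) (f : ℤ → H ⊗[ℚ] (Fin (r - 1) → ℚ)) :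
    rspinField r d f = fun k => rspinOperator H r d (f (k - d)) :=
  rfl

theorem rspinOperator_tensorProduct_basisFun {ι : Type*} (b : Module.Basis ι ℚ H) (r d : ℕ)
    (x : ι × Fin (r - 1)) :
    rspinOperator H r d (b.tensorProduct (Pi.basisFun ℚ _) x) =
      ((Polynomial.bernoulli (d + 1)).eval ((((x.2 : ℕ) : ℚ) + 1) / r) / (d + 1).factorial) •
        b.tensorProduct (Pi.basisFun ℚ _) x := by
  rw [rspinOperator, LinearMap.smul_apply, Module.Basis.tensorProduct_apply',
    TensorProduct.map_tmul, LinearMap.id_apply, bernoulliDiag_basisFun, TensorProduct.tmul_smul,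
    smul_smul, ← Module.Basis.tensorProduct_apply', inv_mul_eq_div]

theorem tmul_spinPairing_rspinOperator_left (g : LinearMap.BilinForm ℚ H) (r d : ℕ)
    (u v : H ⊗[ℚ] (Fin (r - 1) → ℚ)) :
    g.tmul (spinPairing r) (rspinOperator H r d u) v =
      (-1) ^ (d + 1) * g.tmul (spinPairing r) u (rspinOperator H r d v) := by
  simp only [rspinOperator, LinearMap.smul_apply, map_smul, LinearMap.smul_apply, smul_eq_mul,
    g.tmul_map_id_left _ (spinPairing_bernoulliDiag_left r d)]
  ring

theorem isUnit_det_toMatrix_tmul_spinPairing {ι : Type*} [Fintype ι] [DecidableEq ι]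
    {g : LinearMap.BilinForm ℚ H} (hg : g.Nondegenerate) (b : Module.Basis ι ℚ H) (r : ℕ) :
    IsUnit (LinearMap.BilinForm.toMatrix (b.tensorProduct (Pi.basisFun ℚ _))
      (g.tmul (spinPairing r))).det := by
  rw [LinearMap.BilinForm.toMatrix_tmul, Matrix.det_kronecker, toMatrix_spinPairing,
    Matrix.det_permutation]
  simp [(LinearMap.BilinForm.nondegenerate_iff_det_ne_zero b).mp hg]

end RSpin

theorem rspinField_hamiltonian_general {H : Type*} [AddCommGroup H] [Module ℚ H]
    {ι : Type*} [Fintype ι] [DecidableEq ι]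
    (g : H →ₗ[ℚ] H →ₗ[ℚ] ℚ)
    (hsymm : ∀ u v : H, g u v = g v u)
    (hnondeg : ∀ u : H, (∀ v : H, g u v = 0) → u = 0)
    (b : Module.Basis ι ℚ H)
    (r d : ℕ)
    (f : ℤ → H ⊗[ℚ] (Fin (r - 1) → ℚ)) (hf : IsGivental f) :
    letI gV : (H ⊗[ℚ] (Fin (r - 1) → ℚ)) →ₗ[ℚ] (H ⊗[ℚ] (Fin (r - 1) → ℚ)) →ₗ[ℚ] ℚ :=
      LinearMap.BilinForm.tmul g (spinPairing r)
    letI bV : Module.Basis (ι × Fin (r - 1)) ℚ (H ⊗[ℚ] (Fin (r - 1) → ℚ)) :=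
      Module.Basis.tensorProduct b (Pi.basisFun ℚ (Fin (r - 1)))
    letI G : Matrix (ι × Fin (r - 1)) (ι × Fin (r - 1)) ℚ :=
      Matrix.of fun x y => gV (bV x) (bV y)
    letI c : Fin (r - 1) → ℚ := fun m =>
      (Polynomial.bernoulli (d + 1)).eval ((((m : ℕ) : ℚ) + 1) / r) /
        (Nat.factorial (d + 1) : ℚ)
    (1 / 2 : ℚ) * giventalForm gV (rspinField r d f) f =
      -(∑ᶠ a : ℕ, ∑ x : ι × Fin (r - 1),
          c x.2 * qCoord bV f a x * pCoord gV bV f (a + d) x) +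
      (1 / 2 : ℚ) * ∑ a ∈ Finset.range d, ∑ x : ι × Fin (r - 1), ∑ y : ι × Fin (r - 1),
          (-1 : ℚ) ^ (d - 1 - a) * c x.2 * (G⁻¹ x y) *
            pCoord gV bV f a x * pCoord gV bV f (d - 1 - a) y := by
  have hgS : g.IsSymm := ⟨hsymm⟩
  have hgN : g.Nondegenerate := hgS.isRefl.nondegenerate_iff_separatingLeft.mpr hnondeg
  -- rewrites `G` as the Gram matrix `toMatrix bV gV`
  simp only [← LinearMap.BilinForm.toMatrix_apply]
  rw [rspinField_eq]
  exact half_giventalForm_shift_eq_darboux _ (hgS.tmul ⟨spinPairing_comm r⟩).eq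
    (tmul_spinPairing_rspinOperator_left g r d) _
    (isUnit_det_toMatrix_tmul_spinPairing hgN b r)
    (rspinOperator_tensorProduct_basisFun b r d) hf

/-- The Hamiltonian of the r-spin Givental field:
`(1/2) ω(Tf, f)` equals the quadratic expression
`− Σ_{a,μ,m} (B_{d+1}(m/r)/(d+1)!) q_a^{μ⊗m} p_{a+d,μ⊗m}
 + (1/2) Σ_{a+a'=d−1} (−1)^{a'} (B_{d+1}(m/r)/(d+1)!) g^{μ⊗m,μ'⊗m'} p_{a,μ⊗m} p_{a',μ'⊗m'}`
in the Darboux coordinates of `f`. -/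
theorem rspinField_hamiltonian {H : Type*} [AddCommGroup H] [Module ℚ H]
    [FiniteDimensional ℚ H] {ι : Type*} [Fintype ι] [DecidableEq ι]
    (g : H →ₗ[ℚ] H →ₗ[ℚ] ℚ)
    (hsymm : ∀ u v : H, g u v = g v u)
    (hnondeg : ∀ u : H, (∀ v : H, g u v = 0) → u = 0)
    (b : Module.Basis ι ℚ H)
    (r d : ℕ) (hr : 2 ≤ r) (hd : 1 ≤ d)
    (f : ℤ → H ⊗[ℚ] (Fin (r - 1) → ℚ)) (hf : IsGivental f) :
    letI gV : (H ⊗[ℚ] (Fin (r - 1) → ℚ)) →ₗ[ℚ] (H ⊗[ℚ] (Fin (r - 1) → ℚ)) →ₗ[ℚ] ℚ :=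
      LinearMap.BilinForm.tmul g (spinPairing r)
    letI bV : Module.Basis (ι × Fin (r - 1)) ℚ (H ⊗[ℚ] (Fin (r - 1) → ℚ)) :=
      Module.Basis.tensorProduct b (Pi.basisFun ℚ (Fin (r - 1)))
    letI G : Matrix (ι × Fin (r - 1)) (ι × Fin (r - 1)) ℚ :=
      Matrix.of fun x y => gV (bV x) (bV y)
    letI c : Fin (r - 1) → ℚ := fun m =>
      (Polynomial.bernoulli (d + 1)).eval ((((m : ℕ) : ℚ) + 1) / r) /
        (Nat.factorial (d + 1) : ℚ)
    (1 / 2 : ℚ) * giventalForm gV (rspinField r d f) f =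
      -(∑ᶠ a : ℕ, ∑ x : ι × Fin (r - 1),
          c x.2 * qCoord bV f a x * pCoord gV bV f (a + d) x) +
      (1 / 2 : ℚ) * ∑ a ∈ Finset.range d, ∑ x : ι × Fin (r - 1), ∑ y : ι × Fin (r - 1),
          (-1 : ℚ) ^ (d - 1 - a) * c x.2 * (G⁻¹ x y) *
            pCoord gV bV f a x * pCoord gV bV f (d - 1 - a) y :=
  rspinField_hamiltonian_general g hsymm hnondeg b r d f hf
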